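/- If r1·s2 − r2·s1 ≠ 0, then the matrix Aξ has rank exactly 4, the matrix Aη has rank exactly 4, and moreover ker(Aξ) = ker(Aη) is a one-dimensional subspace of ℝ⁵. (In the paper this is the statement that the ruled minimal submanifold associated to a 1-isotropic surface has rank ρ = 4, i.e. one-dimensional relative nullity in the essential block, on an open dense subset.) -/

import Mathlib

open Matrix

/-- The shape operator `A_ξ` (essential 5×5 block) of the cone of the ruled
minimal submanifold associated to a 1-isotropic surface. -/
def Axi (p1 p2 h1 h2 κ r1 r2 s1 s2 : ℝ) : Matrix (Fin 5) (Fin 5) ℝ :=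
  !![0,  p1, p2,       0,  0;
     p1, h1 + κ, h2,   r1, s1;
     p2, h2, -h1 - κ,  r2, s2;
     0,  r1, r2,       0,  0;
     0,  s1, s2,       0,  0]

/-- The shape operator `A_η` (essential 5×5 block) of the cone of the ruled
minimal submanifold associated to a 1-isotropic surface. -/
def Aeta (p1 p2 h1 h2 κ r1 r2 s1 s2 : ℝ) : Matrix (Fin 5) (Fin 5) ℝ :=
  !![0,   p2, -p1,      0,   0;
     p2,  h2, κ - h1,   r2,  s2;
     -p1, κ - h1, -h2,  -r1, -s1;
     0,   r2, -r1,      0,   0;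
     0,   s2, -s1,      0,   0]

/-!
Both shape operators are instances of one symmetric pattern: first row `(0, p₁, p₂, 0, 0)`, last two
rows `(0, r₁, r₂, 0, 0)` and `(0, s₁, s₂, 0, 0)`, arbitrary symmetric middle block. For a kernel
vector `v` the last two rows force `v₁ = v₂ = 0`, since `r₁s₂ − r₂s₁ ≠ 0`; the first row then holds
automatically and rows one and two become a `2 × 3` system for `(v₀, v₃, v₄)` of rank two, whose
solutions are the multiples of the vector of its `2 × 2` minors. This kernel does not involve the
middle block, and `A_η` arises from the parameters `(p₂, −p₁, r₂, −r₁, s₂, −s₁)`, whose minors are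
those of `A_ξ`. Rank–nullity then gives rank `5 − 1 = 4`.
-/

lemma Matrix.rank_add_finrank_ker_toLin' {K m n : Type*} [Field K] [Fintype m] [Fintype n]
    [DecidableEq n] (A : Matrix m n K) :
    A.rank + Module.finrank K (LinearMap.ker (toLin' A)) = Fintype.card n := by
  rw [Matrix.rank, ← toLin'_apply']
  simpa using LinearMap.finrank_range_add_finrank_ker (toLin' A)

namespace ShapeOperator

def block (p1 p2 a b c r1 r2 s1 s2 : ℝ) : Matrix (Fin 5) (Fin 5) ℝ :=
  !![0,  p1, p2, 0,  0;
     p1, a,  b,  r1, s1;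
     p2, b,  c,  r2, s2;
     0,  r1, r2, 0,  0;
     0,  s1, s2, 0,  0]

def nullVector (p1 p2 r1 r2 s1 s2 : ℝ) : Fin 5 → ℝ :=
  ![r1 * s2 - r2 * s1, 0, 0, p2 * s1 - p1 * s2, p1 * r2 - p2 * r1]

variable {p1 p2 r1 r2 s1 s2 : ℝ} (a b c : ℝ)

lemma block_mulVec (v : Fin 5 → ℝ) :
    block p1 p2 a b c r1 r2 s1 s2 *ᵥ v =
      ![p1 * v 1 + p2 * v 2,
        p1 * v 0 + a * v 1 + b * v 2 + r1 * v 3 + s1 * v 4,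
        p2 * v 0 + b * v 1 + c * v 2 + r2 * v 3 + s2 * v 4,
        r1 * v 1 + r2 * v 2,
        s1 * v 1 + s2 * v 2] := by
  ext i
  fin_cases i <;> simp [block, mulVec, dotProduct, Fin.sum_univ_five]

lemma nullVector_ne_zero (h : r1 * s2 - r2 * s1 ≠ 0) :
    nullVector p1 p2 r1 r2 s1 s2 ≠ 0 :=
  fun h0 => h (by simpa [nullVector] using congrFun h0 0)

lemma ker_block (h : r1 * s2 - r2 * s1 ≠ 0) :
    LinearMap.ker (toLin' (block p1 p2 a b c r1 r2 s1 s2)) =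
      Submodule.span ℝ {nullVector p1 p2 r1 r2 s1 s2} := by
  ext v
  simp only [LinearMap.mem_ker, toLin'_apply, block_mulVec, Submodule.mem_span_singleton]
  constructor
  · intro hv
    have e1 : p1 * v 0 + a * v 1 + b * v 2 + r1 * v 3 + s1 * v 4 = 0 := by
      simpa using congrFun hv 1
    have e2 : p2 * v 0 + b * v 1 + c * v 2 + r2 * v 3 + s2 * v 4 = 0 := by
      simpa using congrFun hv 2
    have e3 : r1 * v 1 + r2 * v 2 = 0 := by simpa using congrFun hv 3
    have e4 : s1 * v 1 + s2 * v 2 = 0 := by simpa using congrFun hv 4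
    have hv1 : v 1 = 0 :=
      (mul_eq_zero.mp (by linear_combination s2 * e3 - r2 * e4 :
        v 1 * (r1 * s2 - r2 * s1) = 0)).resolve_right h
    have hv2 : v 2 = 0 :=
      (mul_eq_zero.mp (by linear_combination r1 * e4 - s1 * e3 :
        v 2 * (r1 * s2 - r2 * s1) = 0)).resolve_right h
    refine ⟨v 0 / (r1 * s2 - r2 * s1), ?_⟩
    ext i
    fin_cases i <;> simp [nullVector, hv1, hv2] <;> rw [div_mul_eq_mul_div, div_eq_iff h]
    · linear_combination s1 * e2 - s2 * e1 + (s2 * a - s1 * b) * hv1 + (s2 * b - s1 * c) * hv2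
    · linear_combination r2 * e1 - r1 * e2 + (r1 * b - r2 * a) * hv1 + (r1 * c - r2 * b) * hv2
  · rintro ⟨k, rfl⟩
    ext i
    fin_cases i <;> simp [nullVector] <;> ring

lemma finrank_ker_block (h : r1 * s2 - r2 * s1 ≠ 0) :
    Module.finrank ℝ (LinearMap.ker (toLin' (block p1 p2 a b c r1 r2 s1 s2))) = 1 := by
  rw [ker_block a b c h]
  exact finrank_span_singleton (nullVector_ne_zero h)

lemma rank_block (h : r1 * s2 - r2 * s1 ≠ 0) :
    (block p1 p2 a b c r1 r2 s1 s2).rank = 4 := by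
  have := (block p1 p2 a b c r1 r2 s1 s2).rank_add_finrank_ker_toLin'
  rw [finrank_ker_block a b c h, Fintype.card_fin] at this
  omega

end ShapeOperator

open ShapeOperator in
/-- If `r1·s2 − r2·s1 ≠ 0` then both shape operators have rank exactly 4 and a
common one-dimensional kernel (the relative nullity). -/
theorem rank_eq_four_and_ker_eq
    (p1 p2 h1 h2 κ r1 r2 s1 s2 : ℝ) (h : r1 * s2 - r2 * s1 ≠ 0) :
    (Axi p1 p2 h1 h2 κ r1 r2 s1 s2).rank = 4 ∧
    (Aeta p1 p2 h1 h2 κ r1 r2 s1 s2).rank = 4 ∧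
    LinearMap.ker (Matrix.toLin' (Axi p1 p2 h1 h2 κ r1 r2 s1 s2)) =
      LinearMap.ker (Matrix.toLin' (Aeta p1 p2 h1 h2 κ r1 r2 s1 s2)) ∧
    Module.finrank ℝ
      (LinearMap.ker (Matrix.toLin' (Axi p1 p2 h1 h2 κ r1 r2 s1 s2))) = 1 := by
  have hξ : Axi p1 p2 h1 h2 κ r1 r2 s1 s2 = block p1 p2 (h1 + κ) h2 (-h1 - κ) r1 r2 s1 s2 := rfl
  have hη : Aeta p1 p2 h1 h2 κ r1 r2 s1 s2 =
      block p2 (-p1) h2 (κ - h1) (-h2) r2 (-r1) s2 (-s1) := rfl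
  have h' : r2 * -s1 - -r1 * s2 ≠ 0 := by
    convert h using 1
    ring
  have hnull : nullVector p2 (-p1) r2 (-r1) s2 (-s1) = nullVector p1 p2 r1 r2 s1 s2 := by
    ext i; fin_cases i <;> simp [nullVector] <;> ring
  rw [hξ, hη]
  refine ⟨rank_block _ _ _ h, rank_block _ _ _ h', ?_, finrank_ker_block _ _ _ h⟩
  rw [ker_block _ _ _ h, ker_block _ _ _ h', hnull]
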